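/- arXiv:2306.15388 — 2 statements merged into one kernel-verified Lean document; each statement's English description precedes it below -/
import Mathlib

section
/- Let Q be a finite connected quiver. The free (path) category Path_Q of Q is isomorphic, as a category, to the reachability category Reach_Q if and only if Q contains no directed cycles and no quasi-bigons; equivalently, if and only if for every ordered pair of vertices v, w the type of directed paths from v to w in Q is a subsingleton (there is at most one path from v to w, and the only path from a vertex to itself is the empty path). -/
universe u

/-- The reachability category of a quiver `V`: same vertices, carrying the
reachability preorder (`v ≤ w` iff there is a directed path from `v` to `w`),
regarded as a thin category via `Preorder.smallCategory`. -/
def Reach (V : Type*) [Quiver V] : Type _ := V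

/-- A vertex of `V`, viewed as an object of `Reach V`. -/
def Reach.mk {V : Type*} [Quiver V] (v : V) : Reach V := v

/-- The vertex of `V` underlying an object of `Reach V`. -/
def Reach.out {V : Type*} [Quiver V] (v : Reach V) : V := v

/-- The reachability preorder: `v ≤ w` iff there exists a directed path `v` to `w`. -/
instance Reach.instPreorder (V : Type*) [Quiver V] : Preorder (Reach V) where
  le v w := Nonempty (Quiver.Path v.out w.out)
  le_refl v := ⟨Quiver.Path.nil⟩
  le_trans a b c h₁ h₂ := ⟨h₁.some.comp h₂.some⟩

/-!
An isomorphism in `Cat` is faithful, so it transfers thinness from the reachability category to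
the path category. Conversely, if the path category is thin, sending a path to the reachability
it witnesses and a reachability to the unique path witnessing it are mutually inverse functors:
between thin categories, agreement on objects already makes functors equal.
-/

open CategoryTheory

namespace CategoryTheory

theorem Cat.isThin_of_iso {C D : Type u} [Category.{v} C] [Category.{v} D]
    [hD : Quiver.IsThin D] (e : Cat.of C ≅ Cat.of D) : Quiver.IsThin C :=
  fun _ _ => ⟨fun _ _ => (Cat.equivOfIso e).functor.map_injective ((hD _ _).elim _ _)⟩

def Cat.isoOfIsThin {C D : Type u} [Category.{v} C] [Category.{v} D] [hC : Quiver.IsThin C]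
    [hD : Quiver.IsThin D] (F : C ⥤ D) (G : D ⥤ C) (hGF : ∀ X, G.obj (F.obj X) = X)
    (hFG : ∀ Y, F.obj (G.obj Y) = Y) : Cat.of C ≅ Cat.of D where
  hom := F.toCatHom
  inv := G.toCatHom
  hom_inv_id := Cat.ext (Functor.ext hGF fun _ _ _ => (hC _ _).elim _ _)
  inv_hom_id := Cat.ext (Functor.ext hFG fun _ _ _ => (hD _ _).elim _ _)

instance ULiftHom.isThin {C : Type*} [Category C] [Quiver.IsThin C] :
    Quiver.IsThin (ULiftHom.{w} C) :=
  fun _ _ => ⟨fun _ _ => ULift.ext _ _ (Subsingleton.elim _ _)⟩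

end CategoryTheory

namespace Reach

variable {V : Type u} [Quiver.{v + 1} V]

def ofPaths : Paths V ⥤ Reach V where
  obj v := Reach.mk (V := V) v
  map p := homOfLE ⟨p⟩

noncomputable def toPaths [∀ v w : V, Subsingleton (Quiver.Path v w)] : Reach V ⥤ Paths V where
  obj := Reach.out
  map f := (leOfHom f).some
  map_id _ := Subsingleton.elim (α := Quiver.Path _ _) _ _
  map_comp _ _ := Subsingleton.elim (α := Quiver.Path _ _) _ _

end Reach

/-- for a finite connected quiver `V`, the path category `Paths V`
(the free category on `V`) is isomorphic, as a category (i.e. in `Cat`), to the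
reachability category `Reach V` if and only if `V` has no directed cycles and no
quasi-bigons, equivalently iff for every ordered pair of vertices `v, w` the type
of directed paths from `v` to `w` is a subsingleton. -/
theorem statement3 (V : Type u) [Quiver.{u + 1} V] [Fintype V]
    [∀ a b : V, Fintype (a ⟶ b)] [Nonempty V]
    (hconn : ∀ v w : Quiver.Symmetrify V, Nonempty (Quiver.Path v w)) :
    Nonempty (CategoryTheory.Cat.of (CategoryTheory.Paths V) ≅
        CategoryTheory.Cat.of (CategoryTheory.ULiftHom.{u + 1} (Reach V))) ↔
      ∀ v w : V, Subsingleton (Quiver.Path v w) := by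
  refine ⟨fun ⟨e⟩ => Cat.isThin_of_iso e, fun hthin => ?_⟩
  have : Quiver.IsThin (Paths V) := hthin
  exact ⟨Cat.isoOfIsThin (Reach.ofPaths (V := V) ⋙ ULiftHom.up) (ULiftHom.down ⋙ Reach.toPaths)
    (fun _ => rfl) (fun _ => rfl)⟩
end

section
/- Let K be a field and let P and Q be finite partial orders. If the incidence algebras of P and Q over K are isomorphic as K-algebras, then P and Q are order-isomorphic; equivalently, their reachability categories are isomorphic. (This is the paper's Corollary that commuting algebras of finite posets being isomorphic forces the reachability categories to be isomorphic, since for a poset the commuting algebra is the incidence algebra and the reachability category is the poset itself.) -/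
/-!
The diagonal idempotents `e x` of `I(P)` form a complete family of orthogonal idempotents, and so
do their images under an isomorphism `φ : I(P) ≃ I(Q)`. The diagonal projection `I(Q) → (Q → K)`
is a ring hom with nil kernel, so it sends the `φ (e x)` to nonzero complete orthogonal idempotents
of `Q → K`, i.e. to the indicators of a partition of `Q` into `|P|` nonempty blocks. By symmetry
`|P| = |Q|`, so the blocks are singletons `{σ x}`. Then `u = ∑ φ (e x) * e (σ x)` has diagonal `1`,
hence is a unit, and conjugating `φ` by `u` gives an isomorphism sending `e x` to `e (σ x)`.
Finally `x ≤ y` iff `e x * f * e y ≠ 0` for some `f`, which such an isomorphism preserves.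
-/

open Finset

theorem OrthogonalIdempotents.sum_mul_mul_eq_mul_sum_mul {R I : Type*} [Semiring R] [Fintype I]
    {e f : I → R} (he : OrthogonalIdempotents e) (hf : OrthogonalIdempotents f) (i : I) :
    (∑ j, f j * e j) * e i = f i * ∑ j, f j * e j := by
  classical
  simp only [Finset.sum_mul, Finset.mul_sum, mul_assoc, he.mul_eq, ← mul_assoc (f i), hf.mul_eq]
  simp

theorem CompleteOrthogonalIdempotents.exists_eq_ite_pi {ι κ K : Type*} [Fintype ι]
    [DecidableEq ι] [Semiring K] [IsDomain K] {d : ι → κ → K}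
    (hd : CompleteOrthogonalIdempotents d) :
    ∃ τ : κ → ι, ∀ i k, d i k = if τ k = i then 1 else 0 := by
  have hne : ∀ k, ∃ i, d i k ≠ 0 := by
    intro k
    by_contra! h
    simpa [h] using congr_fun hd.complete k
  choose τ hτ using hne
  refine ⟨τ, fun i k => ?_⟩
  split_ifs with hi
  · subst hi
    exact (IsIdempotentElem.iff_eq_zero_or_one.1 (congr_fun (hd.idem (τ k)) k)).resolve_left
      (hτ k)
  · have := congr_fun (hd.ortho hi) k
    exact (mul_eq_zero.1 this).resolve_left (hτ k)

theorem MulEquiv.exists_mul_mul_ne_zero_iff {R S : Type*} [MulZeroClass R] [MulZeroClass S]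
    (σ : R ≃* S) (p q : R) : (∃ s, σ p * s * σ q ≠ 0) ↔ ∃ r, p * r * q ≠ 0 := by
  refine ⟨fun ⟨s, hs⟩ => ⟨σ.symm s, ?_⟩, fun ⟨r, hr⟩ => ⟨σ r, ?_⟩⟩
  · rwa [← map_ne_zero_iff σ σ.injective, map_mul, map_mul, σ.apply_symm_apply]
  · rwa [← map_mul, ← map_mul, map_ne_zero_iff σ σ.injective]

namespace IncidenceAlgebra

section Semiring

variable {𝕜 α : Type*} [Semiring 𝕜]

theorem coe_sum [LE α] {ι : Type*} (s : Finset ι) (f : ι → IncidenceAlgebra 𝕜 α) :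
    ⇑(∑ i ∈ s, f i) = ∑ i ∈ s, ⇑(f i) :=
  map_sum (⟨⟨DFunLike.coe, coe_zero⟩, coe_add⟩ : IncidenceAlgebra 𝕜 α →+ α → α → 𝕜) f s

variable [PartialOrder α] [DecidableEq α]

variable (𝕜) in
def diagIdem (x : α) : IncidenceAlgebra 𝕜 α :=
  ⟨fun a b => if a = x ∧ b = x then 1 else 0,
    fun _ _ hab => if_neg fun h => hab (h.1.trans h.2.symm).le⟩

theorem diagIdem_apply (x a b : α) : diagIdem 𝕜 x a b = if a = x ∧ b = x then 1 else 0 := rfl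

theorem diagIdem_ne_zero [Nontrivial 𝕜] (x : α) : diagIdem 𝕜 x ≠ 0 := fun h => by
  simpa [diagIdem_apply] using congr($h x x)

variable [LocallyFiniteOrder α]

theorem diagIdem_mul_apply (x : α) (f : IncidenceAlgebra 𝕜 α) (a b : α) :
    (diagIdem 𝕜 x * f) a b = if a = x then f a b else 0 := by
  split_ifs with ha
  · subst ha
    by_cases hab : a ≤ b
    · simp [mul_apply, diagIdem_apply, hab]
    · simp [apply_eq_zero_of_not_le hab]
  · simp [mul_apply, diagIdem_apply, ha]

theorem mul_diagIdem_apply (x : α) (f : IncidenceAlgebra 𝕜 α) (a b : α) :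
    (f * diagIdem 𝕜 x) a b = if b = x then f a b else 0 := by
  split_ifs with hb
  · subst hb
    by_cases hab : a ≤ b
    · simp [mul_apply, diagIdem_apply, hab]
    · simp [apply_eq_zero_of_not_le hab]
  · simp [mul_apply, diagIdem_apply, hb]

theorem completeOrthogonalIdempotents_diagIdem [Fintype α] :
    CompleteOrthogonalIdempotents (diagIdem 𝕜 (α := α)) := by
  refine ⟨OrthogonalIdempotents.iff_mul_eq.2 fun x y => ?_, ?_⟩
  · ext a b -
    rw [mul_diagIdem_apply]
    split_ifs <;> grind [diagIdem_apply, zero_apply]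
  · ext a b -
    simp [coe_sum, diagIdem_apply, ite_and, eq_comm]

variable (𝕜 α) in
def diag : IncidenceAlgebra 𝕜 α →+* (α → 𝕜) where
  toFun f x := f x x
  map_one' := by ext; simp
  map_mul' f g := by ext; simp [mul_apply]
  map_zero' := rfl
  map_add' _ _ := rfl

theorem diag_apply (f : IncidenceAlgebra 𝕜 α) (x : α) : diag 𝕜 α f x = f x x := rfl

theorem diag_diagIdem (x : α) : diag 𝕜 α (diagIdem 𝕜 x) = Pi.single x 1 := by
  ext a
  simp [diag_apply, diagIdem_apply, Pi.single_apply]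

theorem pow_apply_eq_zero_of_diag_eq_zero {f : IncidenceAlgebra 𝕜 α} (hf : diag 𝕜 α f = 0)
    {n : ℕ} {a b : α} (hab : #(Icc a b) ≤ n) : (f ^ n) a b = 0 := by
  induction n generalizing a b with
  | zero =>
    have : ¬ a ≤ b := fun h => by simp_all
    exact apply_eq_zero_of_not_le this _
  | succ n ih =>
    rw [pow_succ', mul_apply]
    refine sum_eq_zero fun z hz => ?_
    obtain ⟨haz, hzb⟩ := mem_Icc.1 hz
    rcases haz.eq_or_lt with rfl | haz
    · rw [← diag_apply, hf, Pi.zero_apply, zero_mul]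
    · have := card_lt_card (Icc_ssubset_Icc_left (haz.le.trans hzb) haz le_rfl)
      rw [ih (by omega), mul_zero]

theorem isNilpotent_of_diag_eq_zero [Fintype α] {f : IncidenceAlgebra 𝕜 α}
    (hf : diag 𝕜 α f = 0) : IsNilpotent f :=
  ⟨Fintype.card α, ext fun _ _ _ => pow_apply_eq_zero_of_diag_eq_zero hf (card_le_univ _)⟩

theorem exists_diagIdem_mul_mul_diagIdem_ne_zero_iff [Nontrivial 𝕜] (x y : α) :
    (∃ f : IncidenceAlgebra 𝕜 α, diagIdem 𝕜 x * f * diagIdem 𝕜 y ≠ 0) ↔ x ≤ y := by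
  classical
  have corner (f : IncidenceAlgebra 𝕜 α) (a b : α) :
      (diagIdem 𝕜 x * f * diagIdem 𝕜 y) a b = if a = x ∧ b = y then f x y else 0 := by
    rw [mul_diagIdem_apply, diagIdem_mul_apply]
    aesop
  refine ⟨fun ⟨f, hf⟩ => ?_, fun hxy => ⟨zeta 𝕜, fun h => ?_⟩⟩
  · by_contra hxy
    refine hf (ext fun a b _ => ?_)
    rw [corner, apply_eq_zero_of_not_le hxy, ite_self, zero_apply]
  · simpa [corner, hxy] using congr($h x y)

end Semiring

theorem isUnit_of_diag_eq_one {𝕜 α : Type*} [Ring 𝕜] [PartialOrder α] [LocallyFiniteOrder α]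
    [DecidableEq α] [Fintype α] {u : IncidenceAlgebra 𝕜 α} (hu : diag 𝕜 α u = 1) : IsUnit u := by
  have hnil : IsNilpotent (1 - u) :=
    isNilpotent_of_diag_eq_zero (by rw [map_sub, hu, map_one, sub_self])
  rw [← sub_sub_cancel 1 u]
  exact hnil.isUnit_one_sub

section Isomorphism

variable {K P Q : Type*} [PartialOrder P] [LocallyFiniteOrder P] [DecidableEq P]
  [PartialOrder Q] [LocallyFiniteOrder Q] [DecidableEq Q]

theorem le_iff_le_of_map_diagIdem [Semiring K] [Nontrivial K]
    (ψ : IncidenceAlgebra K P ≃* IncidenceAlgebra K Q) {σ : P → Q}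
    (hψ : ∀ x, ψ (diagIdem K x) = diagIdem K (σ x)) (x y : P) : x ≤ y ↔ σ x ≤ σ y := by
  rw [← exists_diagIdem_mul_mul_diagIdem_ne_zero_iff (𝕜 := K),
    ← exists_diagIdem_mul_mul_diagIdem_ne_zero_iff (𝕜 := K), ← hψ, ← hψ,
    ψ.exists_mul_mul_ne_zero_iff]

variable [Fintype P] [Fintype Q]

theorem exists_surjective_diag_map_diagIdem [Semiring K] [IsDomain K]
    (φ : IncidenceAlgebra K P ≃+* IncidenceAlgebra K Q) :
    ∃ τ : Q → P, Function.Surjective τ ∧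
      ∀ x q, diag K Q (φ (diagIdem K x)) q = if τ q = x then 1 else 0 := by
  obtain ⟨τ, hτ⟩ := ((completeOrthogonalIdempotents_diagIdem.map φ.toRingHom).map
    (diag K Q)).exists_eq_ite_pi
  refine ⟨τ, fun x => ?_, hτ⟩
  by_contra! h
  have hzero : diag K Q (φ (diagIdem K x)) = 0 := funext fun q => by
    simpa [h q] using hτ x q
  have := ((completeOrthogonalIdempotents_diagIdem.idem x).map φ).eq_zero_of_isNilpotent
    (isNilpotent_of_diag_eq_zero hzero)
  exact diagIdem_ne_zero x (by simpa using this)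

theorem card_le_card_of_ringEquiv [Semiring K] [IsDomain K]
    (φ : IncidenceAlgebra K P ≃+* IncidenceAlgebra K Q) : Fintype.card P ≤ Fintype.card Q :=
  let ⟨_, hτ, _⟩ := exists_surjective_diag_map_diagIdem φ
  Fintype.card_le_of_surjective _ hτ

theorem exists_equiv_diag_map_diagIdem [Semiring K] [IsDomain K]
    (φ : IncidenceAlgebra K P ≃+* IncidenceAlgebra K Q) :
    ∃ σ : P ≃ Q, ∀ x, diag K Q (φ (diagIdem K x)) = Pi.single (σ x) 1 := by
  obtain ⟨τ, hτ, hd⟩ := exists_surjective_diag_map_diagIdem φ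
  have hbij : τ.Bijective := (Fintype.bijective_iff_surjective_and_card τ).2
    ⟨hτ, (card_le_card_of_ringEquiv φ.symm).antisymm (card_le_card_of_ringEquiv φ)⟩
  refine ⟨(Equiv.ofBijective τ hbij).symm, fun x => funext fun q => ?_⟩
  simp [hd, Pi.single_apply, Equiv.eq_symm_apply]

theorem exists_mulEquiv_map_diagIdem [Ring K]
    (φ : IncidenceAlgebra K P ≃+* IncidenceAlgebra K Q) (σ : P ≃ Q)
    (hσ : ∀ x, diag K Q (φ (diagIdem K x)) = Pi.single (σ x) 1) :
    ∃ ψ : IncidenceAlgebra K P ≃* IncidenceAlgebra K Q,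
      ∀ x, ψ (diagIdem K x) = diagIdem K (σ x) := by
  set u := ∑ x, φ (diagIdem K x) * diagIdem K (σ x)
  have hdiag : diag K Q u = 1 := by
    simp only [u, map_sum, map_mul, hσ, diag_diagIdem, ← Pi.single_mul, mul_one]
    exact (Equiv.sum_comp σ (Pi.single · 1)).trans (Finset.univ_sum_single 1)
  obtain ⟨v, hv⟩ := isUnit_of_diag_eq_one hdiag
  have he := (completeOrthogonalIdempotents_diagIdem (𝕜 := K) (α := Q)).toOrthogonalIdempotents
  have hconj (x : P) : φ (diagIdem K x) * v = v * diagIdem K (σ x) := by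
    rw [hv]
    exact (((OrthogonalIdempotents.equiv σ).2 he).sum_mul_mul_eq_mul_sum_mul
      (completeOrthogonalIdempotents_diagIdem.toOrthogonalIdempotents.map φ.toRingHom) x).symm
  refine ⟨φ.toMulEquiv.trans (MulDistribMulAction.toMulEquiv _ (ConjAct.toConjAct v⁻¹)),
    fun x => ?_⟩
  simp only [MulEquiv.trans_apply, MulDistribMulAction.toMulEquiv_apply, ConjAct.units_smul_def,
    ConjAct.ofConjAct_toConjAct, inv_inv, RingEquiv.toMulEquiv_eq_coe, RingEquiv.coe_toMulEquiv]
  rw [mul_assoc, hconj, Units.inv_mul_cancel_left]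

end Isomorphism

end IncidenceAlgebra

open IncidenceAlgebra

/-- if the incidence algebras over a field `K` of two finite partial
orders `P` and `Q` are isomorphic as `K`-algebras, then `P` and `Q` are
order-isomorphic (equivalently, their reachability categories are isomorphic). -/
theorem statement9 (K : Type*) [Field K] (P Q : Type*)
    [PartialOrder P] [PartialOrder Q] [Fintype P] [Fintype Q]
    [LocallyFiniteOrder P] [LocallyFiniteOrder Q] [DecidableEq P] [DecidableEq Q]
    (h : Nonempty (IncidenceAlgebra K P ≃ₐ[K] IncidenceAlgebra K Q)) :
    Nonempty (P ≃o Q) := by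
  obtain ⟨φ⟩ := h
  obtain ⟨σ, hσ⟩ := exists_equiv_diag_map_diagIdem φ.toRingEquiv
  obtain ⟨ψ, hψ⟩ := exists_mulEquiv_map_diagIdem _ σ hσ
  exact ⟨⟨σ, (le_iff_le_of_map_diagIdem ψ hψ _ _).symm⟩⟩
end
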